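/- There is a constant $C>0$ such that for every $M\ge1$ and every integer $k\ge1$, $\int_{-M}^{M}h_k(t)^2\,dt\le C\,M\,k^{-1/2}$, where $h_k$ is the $k$-th Hermite function. -/

import Mathlib

/-!
With `He_k` the probabilists' Hermite polynomial (`Polynomial.hermite`), the Hermite function
is `h_k(t) = c_k He_k(√2 t) e^{-t²/2}`, and the ladder relations
`h_k' = t h_k - √(2(k+1)) h_{k+1}` and `h_{k+1}' = √(2(k+1)) h_k - t h_{k+1}` show that `h_k`
solves Weber's equation `h'' = (t² - e) h` with `e = 2k + 1`. For any solution of that equation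
the energy `E = h'² + (e - t²) h²` satisfies `E' = -2 t h²`; when `E → 0` at `+∞` it therefore
decreases on `[0, ∞)` from `E(0)` to `0`. Hence `h² ≤ 2 E(0) / e` where `t² ≤ e / 2`, while
`∫ t h² ≤ E(0) / 2` controls the rest of `[0, M]`, so `∫₀^M h² ≤ 3 M E(0) / e`; as `h_k²` is
even, this doubles to `[-M, M]`.

It remains to see `E(0) = 2(k+1) h_{k+1}(0)² + (2k+1) h_k(0)² = O(√k)`. Comparing the two
ladder relations at `0` gives `(k+2) h_{k+2}(0)² = (k+1) h_k(0)²`, whence `h_n(0)⁴ (n+2) ≤ 1`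
by induction.
-/

open MeasureTheory

noncomputable section

/-- The `k`-th (physicists') Hermite function on `ℝ`. -/
def hermiteFun (k : ℕ) (t : ℝ) : ℝ :=
  (Real.sqrt (2 ^ k * Nat.factorial k * Real.sqrt Real.pi))⁻¹ *
    ((-1 : ℝ) ^ k * Real.exp (t ^ 2) *
      iteratedDeriv k (fun s : ℝ => Real.exp (-(s ^ 2))) t) * Real.exp (-(t ^ 2) / 2)

open Polynomial Real Filter Set Topology
open scoped Nat

namespace Polynomial

theorem derivative_hermite (n : ℕ) :
    derivative (hermite n) = X * hermite n - hermite (n + 1) := by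
  rw [hermite_succ]
  ring

theorem derivative_hermite_succ (n : ℕ) :
    derivative (hermite (n + 1)) = C ((n : ℤ) + 1) * hermite n := by
  induction n with
  | zero => simp
  | succ n ih =>
    rw [hermite_succ (n + 1), derivative_sub, derivative_mul, derivative_X, ih, derivative_C_mul,
      hermite_succ n]
    simp only [Nat.cast_succ, map_add, C_1]
    ring

end Polynomial

theorem tendsto_eval_mul_exp_neg_sq_atTop (p : ℝ[X]) :
    Tendsto (fun t => p.eval t * exp (-(t ^ 2 / 2))) atTop (𝓝 0) := by
  refine squeeze_zero_norm' ?_ (by simpa using (p.tendsto_div_exp_atTop).norm)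
  filter_upwards [eventually_ge_atTop 2] with t ht
  rw [norm_mul, norm_eq_abs, norm_of_nonneg (exp_pos _).le, div_eq_mul_inv _ (exp t), ← exp_neg]
  gcongr
  nlinarith

theorem intervalIntegral.integral_neg_self_eq_two_smul_of_even {E : Type*} [NormedAddCommGroup E]
    [NormedSpace ℝ E] {f : ℝ → E} {a : ℝ} (hf : ∀ x, f (-x) = f x)
    (hfi : IntervalIntegrable f volume (-a) a) :
    ∫ x in -a..a, f x = (2 : ℝ) • ∫ x in 0..a, f x := by
  have h0 : (0 : ℝ) ∈ uIcc (-a) a := by rcases le_total 0 a with h | h <;> simp [h]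
  have hneg : ∫ x in -a..0, f x = ∫ x in 0..a, f x := by
    simpa [hf] using (intervalIntegral.integral_comp_neg (a := 0) (b := a) f).symm
  rw [← intervalIntegral.integral_add_adjacent_intervals
    (hfi.mono_set (uIcc_subset_uIcc left_mem_uIcc h0))
    (hfi.mono_set (uIcc_subset_uIcc h0 right_mem_uIcc)), hneg, two_smul]

section WeberEnergy

def weberEnergy (u v : ℝ → ℝ) (e t : ℝ) : ℝ := v t ^ 2 + (e - t ^ 2) * u t ^ 2

variable {u v : ℝ → ℝ} {e : ℝ}

theorem hasDerivAt_weberEnergy (hu : ∀ t, HasDerivAt u (v t) t)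
    (hv : ∀ t, HasDerivAt v ((t ^ 2 - e) * u t) t) (t : ℝ) :
    HasDerivAt (weberEnergy u v e) (-2 * t * u t ^ 2) t := by
  have h := ((hv t).pow 2).add (((hasDerivAt_pow 2 t).const_sub e).mul ((hu t).pow 2))
  refine h.congr_deriv ?_
  simp only [Pi.pow_apply]
  ring

theorem weberEnergy_antitoneOn (hu : ∀ t, HasDerivAt u (v t) t)
    (hv : ∀ t, HasDerivAt v ((t ^ 2 - e) * u t) t) :
    AntitoneOn (weberEnergy u v e) (Ici 0) := by
  have hE := hasDerivAt_weberEnergy hu hv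
  refine antitoneOn_of_deriv_nonpos (convex_Ici 0)
    (fun t _ => (hE t).continuousAt.continuousWithinAt)
    (fun t _ => (hE t).differentiableAt.differentiableWithinAt) fun t ht => ?_
  rw [interior_Ici, mem_Ioi] at ht
  rw [(hE t).deriv]
  have := sq_nonneg (u t)
  nlinarith

theorem weberEnergy_nonneg (hu : ∀ t, HasDerivAt u (v t) t)
    (hv : ∀ t, HasDerivAt v ((t ^ 2 - e) * u t) t)
    (hlim : Tendsto (weberEnergy u v e) atTop (𝓝 0)) {t : ℝ} (ht : 0 ≤ t) :
    0 ≤ weberEnergy u v e t := by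
  refine le_of_tendsto hlim ?_
  filter_upwards [eventually_ge_atTop t] with s hs
  exact weberEnergy_antitoneOn hu hv ht (ht.trans hs) hs

theorem sub_sq_mul_sq_le_weberEnergy_zero (hu : ∀ t, HasDerivAt u (v t) t)
    (hv : ∀ t, HasDerivAt v ((t ^ 2 - e) * u t) t) {t : ℝ} (ht : 0 ≤ t) :
    (e - t ^ 2) * u t ^ 2 ≤ weberEnergy u v e 0 :=
  calc (e - t ^ 2) * u t ^ 2 ≤ weberEnergy u v e t := le_add_of_nonneg_left (sq_nonneg _)
    _ ≤ weberEnergy u v e 0 := weberEnergy_antitoneOn hu hv self_mem_Ici ht ht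

theorem integral_mul_sq_eq_weberEnergy_sub (hu : ∀ t, HasDerivAt u (v t) t)
    (hv : ∀ t, HasDerivAt v ((t ^ 2 - e) * u t) t) (a b : ℝ) :
    ∫ t in a..b, t * u t ^ 2 = (weberEnergy u v e a - weberEnergy u v e b) / 2 := by
  have hcont : Continuous u := continuous_iff_continuousAt.2 fun t => (hu t).continuousAt
  have hFTC := intervalIntegral.integral_eq_sub_of_hasDerivAt
    (fun t _ => hasDerivAt_weberEnergy hu hv t)
    ((by fun_prop : Continuous fun t => -2 * t * u t ^ 2).intervalIntegrable a b)
  have hmul : ∫ t in a..b, -2 * t * u t ^ 2 = -2 * ∫ t in a..b, t * u t ^ 2 := by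
    simp_rw [mul_assoc]
    exact intervalIntegral.integral_const_mul _ _
  linarith

theorem sq_le_two_mul_weberEnergy_zero_div (hu : ∀ t, HasDerivAt u (v t) t)
    (hv : ∀ t, HasDerivAt v ((t ^ 2 - e) * u t) t) (he : 0 < e) {t : ℝ} (ht : 0 ≤ t)
    (hte : t ^ 2 ≤ e / 2) :
    u t ^ 2 ≤ 2 * weberEnergy u v e 0 / e := by
  have h := sub_sq_mul_sq_le_weberEnergy_zero hu hv ht
  rw [le_div_iff₀ he]
  nlinarith [sq_nonneg (u t)]

theorem integral_sq_le_weberEnergy_zero (hu : ∀ t, HasDerivAt u (v t) t)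
    (hv : ∀ t, HasDerivAt v ((t ^ 2 - e) * u t) t)
    (hlim : Tendsto (weberEnergy u v e) atTop (𝓝 0)) (he : 0 < e) {M : ℝ} (hM : 0 ≤ M) :
    ∫ t in 0..M, u t ^ 2 ≤ 3 * M * weberEnergy u v e 0 / e := by
  set E₀ := weberEnergy u v e 0
  have hE₀ : 0 ≤ E₀ := weberEnergy_nonneg hu hv hlim le_rfl
  have hcont : Continuous u := continuous_iff_continuousAt.2 fun t => (hu t).continuousAt
  set a := √(e / 2)
  have ha : 0 < a := sqrt_pos.2 (by positivity)
  have ha2 : a ^ 2 = e / 2 := sq_sqrt (by positivity)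
  have hinner : ∀ t, 0 ≤ t → t ≤ a → u t ^ 2 ≤ 2 * E₀ / e := fun t ht hta =>
    sq_le_two_mul_weberEnergy_zero_div hu hv he ht (ha2 ▸ pow_le_pow_left₀ ht hta 2)
  rcases le_total M a with hMa | haM
  · calc ∫ t in 0..M, u t ^ 2 ≤ ∫ _ in 0..M, 2 * E₀ / e :=
          intervalIntegral.integral_mono_on hM ((hcont.pow 2).intervalIntegrable _ _)
            intervalIntegrable_const fun t ht => hinner t ht.1 (ht.2.trans hMa)
      _ ≤ 3 * M * E₀ / e := by
          rw [intervalIntegral.integral_const, smul_eq_mul, sub_zero, mul_div_assoc',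
            ← mul_assoc, mul_comm M]
          gcongr
          norm_num
  · have hpt : ∀ t ∈ Icc 0 M, u t ^ 2 ≤ 2 * E₀ / e + t * u t ^ 2 / a := by
      rintro t ⟨ht, -⟩
      rcases le_total t a with hta | hat
      · have : 0 ≤ t * u t ^ 2 / a := by positivity
        linarith [hinner t ht hta]
      · have : u t ^ 2 ≤ t * u t ^ 2 / a := by
          rw [le_div_iff₀ ha]
          nlinarith [sq_nonneg (u t)]
        have : 0 ≤ 2 * E₀ / e := by positivity
        linarith
    have hweighted : ∫ t in 0..M, t * u t ^ 2 ≤ E₀ / 2 := by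
      rw [integral_mul_sq_eq_weberEnergy_sub hu hv]
      linarith [weberEnergy_nonneg hu hv hlim hM]
    have htail : E₀ / 2 / a ≤ M * E₀ / e := by
      rw [div_le_div_iff₀ (by positivity) he]
      nlinarith [mul_le_mul_of_nonneg_left haM (mul_nonneg hE₀ ha.le)]
    calc ∫ t in 0..M, u t ^ 2 ≤ ∫ t in 0..M, (2 * E₀ / e + t * u t ^ 2 / a) :=
          intervalIntegral.integral_mono_on hM ((hcont.pow 2).intervalIntegrable _ _)
            ((by fun_prop : Continuous fun t => 2 * E₀ / e + t * u t ^ 2 / a).intervalIntegrable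
              _ _) hpt
      _ = M * (2 * E₀ / e) + (∫ t in 0..M, t * u t ^ 2) / a := by
          rw [intervalIntegral.integral_add intervalIntegrable_const
            ((by fun_prop : Continuous fun t => t * u t ^ 2 / a).intervalIntegrable _ _),
            intervalIntegral.integral_const, intervalIntegral.integral_div]
          simp
      _ ≤ M * (2 * E₀ / e) + E₀ / 2 / a := by gcongr
      _ ≤ 3 * M * E₀ / e := by
          have : 3 * M * E₀ / e = M * (2 * E₀ / e) + M * E₀ / e := by ring
          linarith

end WeberEnergy

theorem iteratedDeriv_exp_neg_sq (k : ℕ) (t : ℝ) :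
    iteratedDeriv k (fun s : ℝ => exp (-(s ^ 2))) t =
      (-√2) ^ k * aeval (√2 * t) (hermite k) * exp (-(t ^ 2)) := by
  have hscale : (fun s : ℝ => exp (-(s ^ 2))) = fun s => exp (-((√2 * s) ^ 2 / 2)) := by
    ext s
    rw [mul_pow, sq_sqrt zero_le_two]
    ring_nf
  rw [hscale, iteratedDeriv_comp_const_mul (f := fun y => exp (-(y ^ 2 / 2))) (by fun_prop),
    iteratedDeriv_eq_iterate]
  beta_reduce
  rw [deriv_gaussian_eq_hermite_mul_gaussian, mul_pow, sq_sqrt zero_le_two, neg_pow √2]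
  ring_nf

def hermiteFunConst (k : ℕ) : ℝ := (√(k ! * √π))⁻¹

theorem hermiteFun_eq (k : ℕ) (t : ℝ) :
    hermiteFun k t = hermiteFunConst k * aeval (√2 * t) (hermite k) * exp (-(t ^ 2 / 2)) := by
  have hnorm : √(2 ^ k * k ! * √π) = √2 ^ k * √(k ! * √π) := by
    have hpow : √((2 : ℝ) ^ k) = √2 ^ k := by
      rw [sqrt_eq_iff_eq_sq (by positivity) (by positivity), ← pow_mul, mul_comm, pow_mul,
        sq_sqrt zero_le_two]
    rw [mul_assoc, sqrt_mul (by positivity), hpow]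
  have hexp : exp (t ^ 2) * exp (-(t ^ 2)) = 1 := by rw [← exp_add, add_neg_cancel, exp_zero]
  rw [hermiteFun, hermiteFunConst, iteratedDeriv_exp_neg_sq, hnorm, neg_div]
  have hsign : ((-1 : ℝ) ^ k) ^ 2 = 1 := by rw [pow_right_comm, neg_one_sq, one_pow]
  field_simp
  rw [neg_pow √2]
  linear_combination (√2 ^ k * aeval (t * √2) (hermite k)) *
    (exp (t ^ 2) * exp (-t ^ 2) * hsign + hexp)

theorem hermiteFun_neg (k : ℕ) (t : ℝ) : hermiteFun k (-t) = (-1) ^ k * hermiteFun k t := by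
  have h := iteratedDeriv_comp_neg k (fun s : ℝ => exp (-(s ^ 2))) t
  simp only [neg_sq, smul_eq_mul] at h
  have h' : iteratedDeriv k (fun s : ℝ => exp (-(s ^ 2))) (-t) =
      (-1) ^ k * iteratedDeriv k (fun s : ℝ => exp (-(s ^ 2))) t := by
    rw [h, ← mul_assoc, ← mul_pow, neg_one_mul, neg_neg, one_pow, one_mul]
  rw [hermiteFun, hermiteFun, neg_sq, h']
  ring

theorem hasDerivAt_aeval_sqrt_two_mul_mul_exp (p : ℤ[X]) (t : ℝ) :
    HasDerivAt (fun s => aeval (√2 * s) p * exp (-(s ^ 2 / 2)))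
      ((√2 * aeval (√2 * t) (derivative p) - t * aeval (√2 * t) p) * exp (-(t ^ 2 / 2)))
      t := by
  have hp := (Polynomial.hasDerivAt_aeval p (√2 * t)).comp t ((hasDerivAt_id t).const_mul √2)
  have hg := ((hasDerivAt_pow 2 t).div_const 2).neg.exp
  refine (hp.mul hg).congr_deriv ?_
  simp only [mul_one, Pi.neg_apply, Function.comp_apply, Nat.cast_ofNat, Nat.add_one_sub_one,
    pow_one, mul_div_cancel_left₀, two_ne_zero, mul_neg, ne_eq, not_false_eq_true]
  ring

theorem sqrt_succ_mul_hermiteFunConst_succ (k : ℕ) :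
    √(k + 1) * hermiteFunConst (k + 1) = hermiteFunConst k := by
  rw [hermiteFunConst, hermiteFunConst, Nat.factorial_succ, Nat.cast_mul, mul_assoc,
    sqrt_mul (by positivity)]
  push_cast
  field_simp

theorem hasDerivAt_hermiteFun (k : ℕ) (t : ℝ) :
    HasDerivAt (hermiteFun k)
      (t * hermiteFun k t - √(2 * (k + 1)) * hermiteFun (k + 1) t) t := by
  refine (((hasDerivAt_aeval_sqrt_two_mul_mul_exp (hermite k) t).const_mul
    (hermiteFunConst k)).congr_of_eventuallyEq (.of_forall fun s => ?_)).congr_deriv ?_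
  · rw [hermiteFun_eq, mul_assoc]
  rw [hermiteFun_eq, hermiteFun_eq, derivative_hermite, map_sub, map_mul, aeval_X,
    ← sqrt_succ_mul_hermiteFunConst_succ k, sqrt_mul zero_le_two]
  linear_combination
    (t * hermiteFunConst (k + 1) * √(k + 1) * aeval (√2 * t) (hermite k) * exp (-(t ^ 2 / 2))) *
      sq_sqrt zero_le_two

theorem hasDerivAt_hermiteFun_succ (k : ℕ) (t : ℝ) :
    HasDerivAt (hermiteFun (k + 1))
      (√(2 * (k + 1)) * hermiteFun k t - t * hermiteFun (k + 1) t) t := by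
  refine (((hasDerivAt_aeval_sqrt_two_mul_mul_exp (hermite (k + 1)) t).const_mul
    (hermiteFunConst (k + 1))).congr_of_eventuallyEq (.of_forall fun s => ?_)).congr_deriv ?_
  · rw [hermiteFun_eq, mul_assoc]
  rw [hermiteFun_eq, hermiteFun_eq, derivative_hermite_succ, map_mul, aeval_C,
    ← sqrt_succ_mul_hermiteFunConst_succ k, sqrt_mul zero_le_two]
  push_cast
  linear_combination
    (-hermiteFunConst (k + 1) * √2 * aeval (√2 * t) (hermite k) * exp (-(t ^ 2 / 2))) *
      sq_sqrt (by positivity : (0 : ℝ) ≤ k + 1)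

theorem deriv_hermiteFun (k : ℕ) :
    deriv (hermiteFun k) = fun t => t * hermiteFun k t - √(2 * (k + 1)) * hermiteFun (k + 1) t :=
  funext fun t => (hasDerivAt_hermiteFun k t).deriv

theorem hasDerivAt_deriv_hermiteFun (k : ℕ) (t : ℝ) :
    HasDerivAt (deriv (hermiteFun k)) ((t ^ 2 - (2 * k + 1)) * hermiteFun k t) t := by
  rw [deriv_hermiteFun]
  refine (((hasDerivAt_id t).mul (hasDerivAt_hermiteFun k t)).sub
    ((hasDerivAt_hermiteFun_succ k t).const_mul _)).congr_deriv ?_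
  simp only [id, one_mul]
  linear_combination (-hermiteFun k t) * sq_sqrt (by positivity : (0 : ℝ) ≤ 2 * (k + 1))

theorem hermiteFun_zero_sq_recurrence (k : ℕ) :
    (k + 2) * hermiteFun (k + 2) 0 ^ 2 = (k + 1) * hermiteFun k 0 ^ 2 := by
  have h := (hasDerivAt_hermiteFun (k + 1) 0).unique (hasDerivAt_hermiteFun_succ k 0)
  simp only [zero_mul, zero_sub, sub_zero] at h
  have h2 := congrArg (· ^ 2) h
  simp only [neg_sq, mul_pow, sq_sqrt (by positivity : (0 : ℝ) ≤ 2 * (↑(k + 1) + 1)),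
    sq_sqrt (by positivity : (0 : ℝ) ≤ 2 * (k + 1))] at h2
  push_cast at h2
  linear_combination h2 / 2

theorem hermiteFun_zero_pow_four_mul_le (n : ℕ) : hermiteFun n 0 ^ 4 * (n + 2) ≤ 1 := by
  induction n using Nat.twoStepInduction with
  | zero =>
    have h0 : hermiteFun 0 0 = (√√π)⁻¹ := by simp [hermiteFun_eq, hermiteFunConst]
    rw [h0, inv_pow, show 4 = 2 * 2 from rfl, pow_mul, sq_sqrt (sqrt_nonneg _), sq_sqrt pi_pos.le,
      Nat.cast_zero, zero_add, inv_mul_le_iff₀ pi_pos]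
    linarith [pi_gt_three]
  | one => simp [hermiteFun_eq]
  | more n ih _ =>
    have h := hermiteFun_zero_sq_recurrence n
    set x := hermiteFun n 0 ^ 2
    set y := hermiteFun (n + 2) 0 ^ 2
    have hx : x ^ 2 * (n + 2) ≤ 1 := by rw [← pow_mul]; exact ih
    have hpoly : ((n : ℝ) + 1) ^ 2 * (n + 4) ≤ (n + 2) ^ 3 := by nlinarith
    have key : ((n : ℝ) + 2) ^ 2 * (y ^ 2 * (n + 4)) ≤ (n + 2) ^ 2 * 1 :=
      calc ((n : ℝ) + 2) ^ 2 * (y ^ 2 * (n + 4)) = ((n + 1) * x) ^ 2 * (n + 4) := by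
            rw [← h]; ring
        _ ≤ (n + 2) ^ 3 * x ^ 2 := by nlinarith [sq_nonneg x]
        _ ≤ (n + 2) ^ 2 * 1 := by nlinarith [sq_nonneg ((n : ℝ) + 2)]
    push_cast
    rw [show 4 = 2 * 2 from rfl, pow_mul]
    nlinarith [le_of_mul_le_mul_left key (by positivity)]

theorem weberEnergy_hermiteFun_zero_le {k : ℕ} (hk : 1 ≤ k) :
    weberEnergy (hermiteFun k) (deriv (hermiteFun k)) (2 * k + 1) 0 ≤ 5 * √k := by
  have hk' : (1 : ℝ) ≤ k := by exact_mod_cast hk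
  have hx := hermiteFun_zero_pow_four_mul_le (k + 1)
  have hy := hermiteFun_zero_pow_four_mul_le k
  rw [weberEnergy, deriv_hermiteFun]
  simp only [zero_mul, zero_sub, neg_sq, mul_pow,
    sq_sqrt (by positivity : (0 : ℝ) ≤ 2 * (k + 1)), ne_eq, OfNat.ofNat_ne_zero,
    not_false_eq_true, zero_pow, sub_zero]
  push_cast at hx
  set x := hermiteFun (k + 1) 0 ^ 2
  set y := hermiteFun k 0 ^ 2
  rw [show 4 = 2 * 2 from rfl, pow_mul] at hx hy
  have hx' : ((k : ℝ) + 1) ^ 2 * x ^ 2 ≤ k + 1 := by nlinarith [sq_nonneg x]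
  have hy' : (2 * (k : ℝ) + 1) ^ 2 * y ^ 2 ≤ 4 * k := by nlinarith [sq_nonneg y]
  have hsq : (2 * (k + 1) * x + (2 * k + 1) * y) ^ 2 ≤ 25 * k := by
    nlinarith [sq_nonneg (2 * (k + 1) * x - (2 * k + 1) * y)]
  nlinarith [sq_sqrt (by positivity : (0 : ℝ) ≤ k), sqrt_nonneg (k : ℝ),
    (by positivity : 0 ≤ 2 * ((k : ℝ) + 1) * x + (2 * k + 1) * y)]

theorem tendsto_eval_mul_hermiteFun_atTop (p : ℝ[X]) (k : ℕ) :
    Tendsto (fun t => p.eval t * hermiteFun k t) atTop (𝓝 0) := by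
  refine (tendsto_eval_mul_exp_neg_sq_atTop
    (C (hermiteFunConst k) * p * ((hermite k).map (Int.castRingHom ℝ)).comp (C √2 * X))).congr
    fun t => ?_
  simp only [eval_mul, eval_C, eval_comp, eval_X, eval_map, hermiteFun_eq, aeval_def,
    algebraMap_int_eq]
  ring

theorem tendsto_weberEnergy_hermiteFun_atTop (k : ℕ) :
    Tendsto (weberEnergy (hermiteFun k) (deriv (hermiteFun k)) (2 * k + 1)) atTop (𝓝 0) := by
  have hH := tendsto_eval_mul_hermiteFun_atTop 1 k
  have hT := tendsto_eval_mul_hermiteFun_atTop X k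
  have hH' := tendsto_eval_mul_hermiteFun_atTop 1 (k + 1)
  simp only [eval_one, one_mul, eval_X] at hH hT hH'
  have h := ((hT.sub (hH'.const_mul √(2 * (k + 1)))).pow 2).add
    ((hH.pow 2).const_mul (2 * k + 1 : ℝ)) |>.sub (hT.pow 2)
  simp only [mul_zero, sub_zero, ne_eq, OfNat.ofNat_ne_zero, not_false_eq_true, zero_pow,
    add_zero] at h
  refine h.congr fun t => ?_
  rw [weberEnergy, deriv_hermiteFun]
  ring

theorem integral_hermiteFun_sq_le {k : ℕ} (hk : 1 ≤ k) {M : ℝ} (hM : 0 ≤ M) :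
    ∫ t in -M..M, hermiteFun k t ^ 2 ≤ 15 * M / √k := by
  have hderiv := fun t => (hasDerivAt_hermiteFun k t).differentiableAt.hasDerivAt
  have hhalf := integral_sq_le_weberEnergy_zero hderiv (hasDerivAt_deriv_hermiteFun k)
    (tendsto_weberEnergy_hermiteFun_atTop k) (by positivity) hM
  have hE := weberEnergy_hermiteFun_zero_le hk
  have hcont : Continuous (hermiteFun k) :=
    continuous_iff_continuousAt.2 fun t => (hderiv t).continuousAt
  rw [intervalIntegral.integral_neg_self_eq_two_smul_of_even (f := fun t => hermiteFun k t ^ 2)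
    (fun t => by rw [hermiteFun_neg, mul_pow, pow_right_comm, neg_one_sq, one_pow, one_mul])
    ((hcont.pow 2).intervalIntegrable _ _), smul_eq_mul]
  have hs : 0 < √(k : ℝ) := sqrt_pos.2 (by positivity)
  calc 2 * ∫ t in 0..M, hermiteFun k t ^ 2 ≤ 2 * (3 * M * (5 * √k) / (2 * k + 1)) := by
        grw [hhalf, hE]
    _ ≤ 15 * M / √k := by
        rw [mul_div_assoc', div_le_div_iff₀ (by positivity) hs]
        nlinarith [sq_sqrt (Nat.cast_nonneg (α := ℝ) k)]

/-- Local `L²` bound for the one-dimensional Hermite functions: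
`∫_{-M}^{M} h_k(t)² dt ≤ C M k^{-1/2}`. -/
theorem hermiteFun_local_L2_bound :
    ∃ C : ℝ, 0 < C ∧
      ∀ M : ℝ, 1 ≤ M → ∀ k : ℕ, 1 ≤ k →
        (∫ t in (-M)..M, (hermiteFun k t) ^ 2) ≤ C * M * ((k : ℝ) ^ (-(1 / 2) : ℝ)) := by
  refine ⟨15, by norm_num, fun M hM k hk => ?_⟩
  rw [rpow_neg (Nat.cast_nonneg k), ← sqrt_eq_rpow, ← div_eq_mul_inv]
  exact integral_hermiteFun_sq_le hk (zero_le_one.trans hM)
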